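/- arXiv:1206.0071 — 8 statements merged into one kernel-verified Lean document; each statement's English description precedes it below -/
import Mathlib

section
/- Let X be a uniform space, Y a uniform Peano space (connected and uniformly locally path-connected), and f : Y → X a uniformly continuous map. Then f : Y → P(X) is uniformly continuous, where P(X) is X with the uniform structure generated by the sets pc(E). -/
open Set
open scoped Uniformity unitInterval

/-- A subset `s` of a uniform space is `E`-bounded if it is contained in a ball `B(z,E)`. -/
def IsEBounded {X : Type*} [UniformSpace X] (E : Set (X × X)) (s : Set X) : Prop :=
  ∃ z : X, ∀ y ∈ s, (z, y) ∈ E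

/-- `pcRel E` is the set of pairs `(x,y)` that can be connected by an `E`-bounded path. -/
def pcRel {X : Type*} [UniformSpace X] (E : Set (X × X)) : Set (X × X) :=
  {p | ∃ γ : Path p.1 p.2, IsEBounded E (Set.range γ)}

/-- If `Y` is a uniform Peano space (connected and uniformly locally path-connected) and
`f : Y → X` is uniformly continuous, then `f : Y → P(X)` is uniformly continuous, where
`P(X)` has the uniform structure with base `{pc(E)}`. -/
theorem stmt_3 {X Y : Type*} [UniformSpace X] [UniformSpace Y] (f : Y → X)
    (hconn : ConnectedSpace Y)
    (hulpc : ∀ G ∈ 𝓤 Y, ∃ H ∈ 𝓤 Y, ∀ p ∈ H,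
      ∃ γ : Path (Prod.fst p) (Prod.snd p), IsEBounded G (Set.range γ))
    (hf : UniformContinuous f) :
    ∀ E ∈ 𝓤 X, Prod.map f f ⁻¹' pcRel E ∈ 𝓤 Y := by
  intro E hE
  obtain ⟨H, hH, hpath⟩ := hulpc (Prod.map f f ⁻¹' E) (hf hE)
  refine Filter.mem_of_superset hH ?_
  rintro ⟨a, b⟩ hab
  obtain ⟨γ, z, hz⟩ := hpath _ hab
  exact ⟨γ.map hf.continuous, f z, by rintro _ ⟨t, rfl⟩; exact hz _ ⟨t, rfl⟩⟩
end

section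
/- If X is a metrizable uniform space, then its universal Peano space P(X) (the set X with the uniform structure generated by {pc(E)}) is metrizable. -/
open Set Filter
open scoped Uniformity unitInterval

lemma pcRel_mono {X : Type*} [UniformSpace X] : Monotone (pcRel (X := X)) := by
  intro E F hEF p ⟨γ, z, hz⟩
  exact ⟨γ, z, fun y hy => hEF (hz y hy)⟩

/-- If `X` is a metrizable uniform space (separated with a countable base of entourages),
then its universal Peano space `P(X)`, whose uniformity is `(𝓤 X).lift' pcRel`
(generated by the sets `pc(E)`), is metrizable: it is separated and has a countable base. -/
theorem stmt_4 {X : Type*} [UniformSpace X] [(𝓤 X).IsCountablyGenerated]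
    (hsep : ∀ x y : X, (∀ E ∈ 𝓤 X, (x, y) ∈ E) → x = y) :
    ((𝓤 X).lift' pcRel).IsCountablyGenerated ∧
    (∀ x y : X, (∀ S ∈ (𝓤 X).lift' pcRel, (x, y) ∈ S) → x = y) := by
  constructor
  · obtain ⟨s, hs⟩ := (𝓤 X).exists_antitone_basis
    exact (hs.toHasBasis.lift' pcRel_mono).isCountablyGenerated
  · intro x y h
    apply hsep
    intro E hE
    obtain ⟨t, ht, htsymm, htE⟩ := comp_symm_mem_uniformity_sets hE
    have hxy : (x, y) ∈ pcRel t := h _ (mem_lift' ht)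
    obtain ⟨γ, z, hz⟩ := hxy
    have hx : (z, x) ∈ t := by simpa using hz _ ⟨0, γ.source⟩
    have hy : (z, y) ∈ t := hz _ ⟨1, γ.target⟩
    exact htE ⟨z, htsymm.symm _ _ hx, hy⟩
end

section
/- Let X be a topological space with basepoint x₀. In the whisker topology on π₁(X,x₀), if the inversion map g ↦ g⁻¹ is continuous, then multiplication is also continuous; hence π₁^wh(X,x₀) is a topological group. -/
open Set
open scoped unitInterval

/-- The whisker topology on `π₁(X,x₀)`: basic open sets are
`B(a,U) = { a·[γ] : γ a loop at x₀ contained in the open neighborhood U of x₀ }`. -/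
def whiskerTop {X : Type*} [TopologicalSpace X] (x₀ : X) :
    TopologicalSpace (Path.Homotopic.Quotient x₀ x₀) :=
  TopologicalSpace.generateFrom
    {S | ∃ (a : Path.Homotopic.Quotient x₀ x₀) (U : Set X), IsOpen U ∧ x₀ ∈ U ∧
      S = {b | ∃ γ : Path x₀ x₀, Set.range γ ⊆ U ∧ b = a.trans ⟦γ⟧}}

/-- Inversion (reversal of loops) on `π₁(X,x₀)`. -/
def loopInv {X : Type*} [TopologicalSpace X] (x₀ : X) :
    Path.Homotopic.Quotient x₀ x₀ → Path.Homotopic.Quotient x₀ x₀ :=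
  Quotient.map Path.symm fun _ _ h => Nonempty.map Path.Homotopy.symm₂ h

theorem Path.Homotopic.comp_lift {X : Type*} [TopologicalSpace X] {x₀ x₁ x₂ : X}
    (P₀ : Path x₀ x₁) (P₁ : Path x₁ x₂) :
    (⟦P₀.trans P₁⟧ : Path.Homotopic.Quotient x₀ x₂) = Path.Homotopic.Quotient.trans ⟦P₀⟧ ⟦P₁⟧ :=
  rfl


section Aux
variable {X : Type*} [TopologicalSpace X] {x₀ : X}

/-- Notation for basic whisker sets. -/
def wB (a : Path.Homotopic.Quotient x₀ x₀) (U : Set X) : Set (Path.Homotopic.Quotient x₀ x₀) :=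
  {b | ∃ γ : Path x₀ x₀, Set.range γ ⊆ U ∧ b = a.trans ⟦γ⟧}

theorem wComp_assoc (a b c : Path.Homotopic.Quotient x₀ x₀) :
    (a.trans b).trans c = a.trans (b.trans c) := by
  induction a using Quotient.inductionOn
  induction b using Quotient.inductionOn
  induction c using Quotient.inductionOn
  rw [← Path.Homotopic.comp_lift, ← Path.Homotopic.comp_lift, ← Path.Homotopic.comp_lift,
    ← Path.Homotopic.comp_lift]
  exact Quotient.sound ⟨Path.Homotopy.transAssoc _ _ _⟩

theorem wComp_refl (a : Path.Homotopic.Quotient x₀ x₀) :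
    a.trans ⟦Path.refl x₀⟧ = a := by
  induction a using Quotient.inductionOn
  rw [← Path.Homotopic.comp_lift]
  exact Quotient.sound ⟨Path.Homotopy.transRefl _⟩

theorem wInv_comp (a b : Path.Homotopic.Quotient x₀ x₀) :
    loopInv x₀ (a.trans b) = (loopInv x₀ b).trans (loopInv x₀ a) := by
  induction a using Quotient.inductionOn with | h p =>
  induction b using Quotient.inductionOn with | h q =>
  rw [← Path.Homotopic.comp_lift]
  show ⟦(p.trans q).symm⟧ = Path.Homotopic.Quotient.trans ⟦q.symm⟧ ⟦p.symm⟧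
  rw [← Path.Homotopic.comp_lift, Path.trans_symm]

theorem wInv_inv (a : Path.Homotopic.Quotient x₀ x₀) :
    loopInv x₀ (loopInv x₀ a) = a := by
  induction a using Quotient.inductionOn with | h p =>
  show ⟦p.symm.symm⟧ = ⟦p⟧
  rw [Path.symm_symm]

theorem w_self_mem {a : Path.Homotopic.Quotient x₀ x₀} {U : Set X} (hU : x₀ ∈ U) :
    a ∈ wB a U := by
  refine ⟨Path.refl x₀, ?_, (wComp_refl a).symm⟩
  rw [Path.refl_range]; exact singleton_subset_iff.mpr hU

theorem wB_subset {a c : Path.Homotopic.Quotient x₀ x₀} {U : Set X}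
    (hc : c ∈ wB a U) : wB c U ⊆ wB a U := by
  obtain ⟨γ, hγ, rfl⟩ := hc
  rintro b ⟨δ, hδ, rfl⟩
  refine ⟨γ.trans δ, ?_, ?_⟩
  · rw [Path.trans_range]; exact union_subset hγ hδ
  · erw [wComp_assoc, ← Path.Homotopic.comp_lift]

theorem wB_isOpen {a : Path.Homotopic.Quotient x₀ x₀} {U : Set X}
    (hU : IsOpen U) (hx : x₀ ∈ U) : @IsOpen _ (whiskerTop x₀) (wB a U) :=
  TopologicalSpace.GenerateOpen.basic _ ⟨a, U, hU, hx, rfl⟩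

/-- Basic sets form a neighborhood basis in the whisker topology. -/
theorem w_nhds_basis {s : Set (Path.Homotopic.Quotient x₀ x₀)}
    (hs : @IsOpen _ (whiskerTop x₀) s) :
    ∀ c ∈ s, ∃ U : Set X, IsOpen U ∧ x₀ ∈ U ∧ wB c U ⊆ s := by
  induction hs with
  | basic t ht =>
    obtain ⟨a, U, hU, hx, rfl⟩ := ht
    intro c hc
    exact ⟨U, hU, hx, wB_subset hc⟩
  | univ => intro c _; exact ⟨univ, isOpen_univ, mem_univ _, subset_univ _⟩
  | inter t₁ t₂ _ _ ih₁ ih₂ =>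
    rintro c ⟨h₁, h₂⟩
    obtain ⟨U₁, hU₁, hx₁, hs₁⟩ := ih₁ c h₁
    obtain ⟨U₂, hU₂, hx₂, hs₂⟩ := ih₂ c h₂
    refine ⟨U₁ ∩ U₂, hU₁.inter hU₂, ⟨hx₁, hx₂⟩, ?_⟩
    rintro b ⟨γ, hγ, rfl⟩
    exact ⟨hs₁ ⟨γ, hγ.trans inter_subset_left, rfl⟩,
      hs₂ ⟨γ, hγ.trans inter_subset_right, rfl⟩⟩
  | sUnion S _ ih =>
    rintro c ⟨t, ht, hct⟩
    obtain ⟨U, hU, hx, hs⟩ := ih t ht c hct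
    exact ⟨U, hU, hx, hs.trans (subset_sUnion_of_mem ht)⟩

theorem w_key (hinv : @Continuous _ _ (whiskerTop x₀) (whiskerTop x₀) (loopInv x₀))
    (h : Path.Homotopic.Quotient x₀ x₀) {U : Set X} (hU : IsOpen U) (hx : x₀ ∈ U) :
    ∃ U' : Set X, IsOpen U' ∧ x₀ ∈ U' ∧
      ∀ δ : Path x₀ x₀, Set.range δ ⊆ U' →
        Path.Homotopic.Quotient.trans ⟦δ⟧ h ∈ wB h U := by
  letI := whiskerTop x₀
  have hP : IsOpen (loopInv x₀ ⁻¹' wB h U) :=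
    hinv.isOpen_preimage _ (wB_isOpen hU hx)
  have hmem : loopInv x₀ h ∈ loopInv x₀ ⁻¹' wB h U := by
    show loopInv x₀ (loopInv x₀ h) ∈ wB h U
    rw [wInv_inv]; exact w_self_mem hx
  obtain ⟨U', hU', hx', hsub⟩ := w_nhds_basis hP _ hmem
  refine ⟨U', hU', hx', fun δ hδ => ?_⟩
  have hmem2 : (loopInv x₀ h).trans ⟦δ.symm⟧ ∈ wB (loopInv x₀ h) U' := by
    refine ⟨δ.symm, ?_, rfl⟩
    rw [Path.symm_range]; exact hδ
  have := hsub hmem2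
  have heq : loopInv x₀ ((loopInv x₀ h).trans ⟦δ.symm⟧) =
      Path.Homotopic.Quotient.trans ⟦δ⟧ h := by
    erw [wInv_comp, wInv_inv]
    congr 1
    show ⟦δ.symm.symm⟧ = (⟦δ⟧ : Path.Homotopic.Quotient x₀ x₀)
    rw [Path.symm_symm]
  rw [← heq]
  exact this

end Aux

/-- If inversion is continuous in the whisker topology on `π₁(X,x₀)`, then
multiplication (concatenation) is also continuous; hence `π₁^wh(X,x₀)` is a
topological group. -/
theorem stmt_7 {X : Type*} [TopologicalSpace X] (x₀ : X)
    (hinv : @Continuous _ _ (whiskerTop x₀) (whiskerTop x₀) (loopInv x₀)) :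
    @Continuous _ _ (@instTopologicalSpaceProd _ _ (whiskerTop x₀) (whiskerTop x₀))
      (whiskerTop x₀)
      (fun p : Path.Homotopic.Quotient x₀ x₀ × Path.Homotopic.Quotient x₀ x₀ =>
        p.1.trans p.2) := by
  letI := whiskerTop x₀
  rw [show whiskerTop x₀ = TopologicalSpace.generateFrom _ from rfl, continuous_generateFrom_iff]
  rintro s ⟨a, U, hU, hx, rfl⟩
  rw [isOpen_prod_iff]
  rintro g h ⟨γ, hγ, hgh⟩
  obtain ⟨U', hU', hx', hkey⟩ := w_key hinv h hU hx
  refine ⟨wB g U', wB h U, wB_isOpen hU' hx', wB_isOpen hU hx,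
    w_self_mem hx', w_self_mem hx, ?_⟩
  rintro ⟨g', h'⟩ ⟨⟨δ, hδ, rfl⟩, ⟨ε, hε, rfl⟩⟩
  obtain ⟨ε', hε', hδh⟩ := hkey δ hδ
  refine ⟨γ.trans (ε'.trans ε), ?_, ?_⟩
  · rw [Path.trans_range, Path.trans_range]
    exact union_subset hγ (union_subset hε' hε)
  · have hgh' : g.trans h = a.trans ⟦γ⟧ := hgh
    show (g.trans ⟦δ⟧).trans (h.trans ⟦ε⟧) = a.trans ⟦(γ.trans (ε'.trans ε))⟧
    erw [wComp_assoc, ← wComp_assoc (⟦δ⟧) h, hδh, Path.Homotopic.comp_lift,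
      Path.Homotopic.comp_lift, ← wComp_assoc, ← wComp_assoc, ← wComp_assoc,
      hgh', wComp_assoc, wComp_assoc, ← Path.Homotopic.comp_lift]
end

section
/- π₁(X,x₀) with the whisker topology is discrete if and only if X is semi-locally simply connected at x₀ (there is a neighborhood U of x₀ such that every loop in U based at x₀ is null-homotopic in X). -/
open Set
open scoped unitInterval

lemma whisker_key {X : Type*} [TopologicalSpace X] (x₀ : X)
    (V : Set (Path.Homotopic.Quotient x₀ x₀))
    (hV : TopologicalSpace.GenerateOpen
      {S | ∃ (a : Path.Homotopic.Quotient x₀ x₀) (U : Set X), IsOpen U ∧ x₀ ∈ U ∧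
        S = {b | ∃ γ : Path x₀ x₀, Set.range γ ⊆ U ∧ b = a.trans ⟦γ⟧}} V)
    (b : Path.Homotopic.Quotient x₀ x₀) (hb : b ∈ V) :
    ∃ U : Set X, IsOpen U ∧ x₀ ∈ U ∧
      ∀ γ : Path x₀ x₀, Set.range γ ⊆ U → b.trans ⟦γ⟧ ∈ V := by
  induction hV with
  | basic S hS =>
    obtain ⟨a, U, hU, hx, rfl⟩ := hS
    obtain ⟨γ₀, hγ₀, rfl⟩ := hb
    refine ⟨U, hU, hx, fun γ hγ => ⟨γ₀.trans γ, ?_, ?_⟩⟩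
    · rw [Path.trans_range]; exact union_subset hγ₀ hγ
    · induction a using Quotient.inductionOn with
      | h α =>
        show Path.Homotopic.Quotient.trans (Path.Homotopic.Quotient.trans ⟦α⟧ ⟦γ₀⟧) ⟦γ⟧ = _
        show (⟦(α.trans γ₀).trans γ⟧ : Path.Homotopic.Quotient x₀ x₀) = ⟦α.trans (γ₀.trans γ)⟧
        exact Quotient.sound ⟨Path.Homotopy.transAssoc α γ₀ γ⟩
  | univ => exact ⟨univ, isOpen_univ, mem_univ _, fun _ _ => mem_univ _⟩
  | inter s t _ _ ihs iht =>
    obtain ⟨U, hU, hxU, hU'⟩ := ihs hb.1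
    obtain ⟨W, hW, hxW, hW'⟩ := iht hb.2
    exact ⟨U ∩ W, hU.inter hW, ⟨hxU, hxW⟩, fun γ hγ =>
      ⟨hU' γ (hγ.trans inter_subset_left), hW' γ (hγ.trans inter_subset_right)⟩⟩
  | sUnion S _ ih =>
    obtain ⟨t, ht, hbt⟩ := hb
    obtain ⟨U, hU, hx, hU'⟩ := ih t ht hbt
    exact ⟨U, hU, hx, fun γ hγ => ⟨t, ht, hU' γ hγ⟩⟩

/-- `π₁(X,x₀)` with the whisker topology is discrete if and only if `X` is
semi-locally simply connected at `x₀`: there is a neighborhood `U` of `x₀` such that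
every loop in `U` based at `x₀` is null-homotopic in `X`. -/
theorem stmt_8 {X : Type*} [TopologicalSpace X] (x₀ : X) :
    (∀ a : Path.Homotopic.Quotient x₀ x₀, @IsOpen _ (whiskerTop x₀) {a}) ↔
    (∃ U : Set X, IsOpen U ∧ x₀ ∈ U ∧ ∀ γ : Path x₀ x₀, Set.range γ ⊆ U →
      (⟦γ⟧ : Path.Homotopic.Quotient x₀ x₀) = ⟦Path.refl x₀⟧) := by
  constructor
  · intro h
    have h₀ := h ⟦Path.refl x₀⟧
    obtain ⟨U, hU, hx, hU'⟩ := whisker_key x₀ _ h₀ ⟦Path.refl x₀⟧ rfl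
    refine ⟨U, hU, hx, fun γ hγ => ?_⟩
    have := hU' γ hγ
    replace this : _ = _ := this
    have h1 : Path.Homotopic.Quotient.trans (⟦Path.refl x₀⟧ : Path.Homotopic.Quotient x₀ x₀) ⟦γ⟧
        = (⟦γ⟧ : Path.Homotopic.Quotient x₀ x₀) := by
      show (⟦(Path.refl x₀).trans γ⟧ : Path.Homotopic.Quotient x₀ x₀) = ⟦γ⟧
      exact Quotient.sound ⟨Path.Homotopy.reflTrans γ⟩
    rw [h1] at this
    exact this
  · rintro ⟨U, hU, hx, hU'⟩ a
    have : {a} = {b | ∃ γ : Path x₀ x₀, Set.range γ ⊆ U ∧ b = a.trans ⟦γ⟧} := by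
      have hcomp : a.trans ⟦Path.refl x₀⟧ = a := by
        induction a using Quotient.inductionOn with
        | h α =>
          show Path.Homotopic.Quotient.trans ⟦α⟧ ⟦Path.refl x₀⟧ = _
          show (⟦α.trans (Path.refl x₀)⟧ : Path.Homotopic.Quotient x₀ x₀) = ⟦α⟧
          exact Quotient.sound ⟨Path.Homotopy.transRefl α⟩
      ext b
      simp only [mem_singleton_iff, mem_setOf_eq]
      constructor
      · rintro rfl
        exact ⟨Path.refl x₀, by simp [Path.refl_range, hx], hcomp.symm⟩
      · rintro ⟨γ, hγ, rfl⟩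
        rw [hU' γ hγ, hcomp]
    rw [this]
    exact TopologicalSpace.GenerateOpen.basic _ ⟨a, U, hU, hx, rfl⟩
end

section
/- Let X be a uniform space with basepoint x₀ and E an entourage. Two classes [α],[β] ∈ π₁(X,x₀) are E-close in the lasso uniformity if and only if the loop α ∗ β⁻¹ is path-homotopic to an E-lasso based at x₀. -/
open Set
open scoped Uniformity unitInterval

/-- An `E`-lasso based at `x`: a finite concatenation of loops of the form
`α ∗ γ ∗ α⁻¹`, where `γ` is an `E`-bounded loop and `α` is a path from `x` to `γ(0)`. -/
inductive IsELasso {X : Type*} [UniformSpace X] (E : Set (X × X)) (x : X) :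
    Path x x → Prop
  | conj {z : X} (α : Path x z) (γ : Path z z) (hγ : IsEBounded E (Set.range γ)) :
      IsELasso E x ((α.trans γ).trans α.symm)
  | concat {l₁ l₂ : Path x x} : IsELasso E x l₁ → IsELasso E x l₂ →
      IsELasso E x (l₁.trans l₂)

section aux

open CategoryTheory FundamentalGroupoid

attribute [local instance] Path.Homotopic.setoid

variable {X : Type*} [TopologicalSpace X] {x₀ : X}

/-- `⟦p⟧` as a morphism in the fundamental groupoid. -/
private def qh {x y : X} (p : Path x y) :
    FundamentalGroupoid.mk x ⟶ FundamentalGroupoid.mk y := ⟦p⟧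

private lemma qh_trans {x y z : X} (p : Path x y) (q : Path y z) :
    qh (p.trans q) = qh p ≫ qh q :=
  rfl

private lemma qh_symm {x y : X} (p : Path x y) :
    qh p.symm = CategoryTheory.inv (qh p) := by
  rw [← Groupoid.inv_eq_inv]; rfl

private lemma homotopic_iff_qh {x y : X} (p q : Path x y) :
    p.Homotopic q ↔ qh p = qh q := by
  constructor
  · exact fun h => Quotient.sound h
  · exact fun h => Quotient.exact h

private lemma qh_refl (x : X) :
    qh (Path.refl x) = CategoryTheory.CategoryStruct.id (FundamentalGroupoid.mk x) := rfl

end aux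

/-- Two classes `[α],[β] ∈ π₁(X,x₀)` are `E`-close in the lasso uniformity (i.e. for some
`E`-lasso `l` based at `x₀`, the path `α⁻¹ ∗ l ∗ β` is path-homotopic to an `E`-bounded
path) if and only if `α ∗ β⁻¹` is path-homotopic to an `E`-lasso based at `x₀`. -/
theorem stmt_14 {X : Type*} [UniformSpace X] (x₀ : X)
    (E : Set (X × X)) (hE : E ∈ 𝓤 X) (α β : Path x₀ x₀) :
    (∃ l : Path x₀ x₀, IsELasso E x₀ l ∧ ∃ δ : Path x₀ x₀,
      ((α.symm.trans l).trans β).Homotopic δ ∧ IsEBounded E (Set.range δ)) ↔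
    (∃ L : Path x₀ x₀, IsELasso E x₀ L ∧ (α.trans β.symm).Homotopic L) := by
  constructor
  · rintro ⟨l, hl, δ, hδhom, hδbd⟩
    -- `L = l ∗ (β ∗ δ⁻¹ ∗ β⁻¹)`
    refine ⟨l.trans ((β.trans δ.symm).trans β.symm),
      IsELasso.concat hl (IsELasso.conj β δ.symm (by rwa [Path.symm_range])), ?_⟩
    rw [homotopic_iff_qh] at hδhom ⊢
    simp only [qh_trans, qh_symm] at hδhom ⊢
    rw [← hδhom]
    simp
  · rintro ⟨L, hL, hhom⟩
    refine ⟨L, hL, Path.refl x₀, ?_, x₀, ?_⟩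
    · rw [homotopic_iff_qh] at hhom ⊢
      simp only [qh_trans, qh_symm] at hhom ⊢
      rw [qh_refl, ← hhom]
      simp
    · rintro y ⟨t, rfl⟩
      exact refl_mem_uniformity hE
end

section
/- The lasso uniform structure makes π₁(X,x₀) a topological group: if α ∗ β⁻¹ is path-homotopic to an E-lasso then α⁻¹ ∗ β is path-homotopic to an E-lasso (continuity of inversion), and if α ∗ β⁻¹ and γ ∗ δ⁻¹ are each path-homotopic to E-lassos then (α ∗ γ) ∗ (β ∗ δ)⁻¹ is path-homotopic to an E-lasso (continuity of multiplication). -/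
open Set
open scoped Uniformity unitInterval

open CategoryTheory

attribute [local instance] Path.Homotopic.setoid

namespace LassoAux

variable {X : Type*} [UniformSpace X]

/-- The homotopy class of a path, as a morphism in the fundamental groupoid. -/
def hom {a b : X} (p : Path a b) : (⟨a⟩ : FundamentalGroupoid X) ⟶ ⟨b⟩ := ⟦p⟧

lemma hom_trans {a b c : X} (p : Path a b) (q : Path b c) :
    hom (p.trans q) = hom p ≫ hom q :=
  rfl

lemma hom_symm {a b : X} (p : Path a b) : hom p.symm = inv (hom p) := by
  rw [← Groupoid.inv_eq_inv]; rfl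

lemma homotopic_iff {a b : X} (p q : Path a b) : p.Homotopic q ↔ hom p = hom q :=
  ⟨fun h => Quotient.sound h, fun h => Quotient.exact h⟩

lemma bounded_symm {E : Set (X × X)} {a : X} {γ : Path a a}
    (h : IsEBounded E (Set.range γ)) : IsEBounded E (Set.range γ.symm) := by
  obtain ⟨z, hz⟩ := h
  refine ⟨z, ?_⟩
  rintro y ⟨t, rfl⟩
  exact hz _ ⟨σ t, rfl⟩

lemma lasso_symm {E : Set (X × X)} {x : X} {L : Path x x} (h : IsELasso E x L) :
    ∃ L' : Path x x, IsELasso E x L' ∧ L.symm.Homotopic L' := by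
  induction h with
  | @conj z α γ hγ =>
      refine ⟨(α.trans γ.symm).trans α.symm, .conj α γ.symm (bounded_symm hγ), ?_⟩
      rw [homotopic_iff]
      simp [hom_trans, hom_symm]
  | @concat l₁ l₂ h₁ h₂ ih₁ ih₂ =>
      obtain ⟨L₁, hL₁, hh₁⟩ := ih₁
      obtain ⟨L₂, hL₂, hh₂⟩ := ih₂
      refine ⟨L₂.trans L₁, .concat hL₂ hL₁, ?_⟩
      rw [homotopic_iff] at hh₁ hh₂ ⊢
      rw [hom_symm] at hh₁ hh₂
      simp [hom_trans, hom_symm, ← hh₁, ← hh₂]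

lemma lasso_conj {E : Set (X × X)} {x : X} {L : Path x x} (h : IsELasso E x L)
    (ω : Path x x) :
    ∃ L' : Path x x, IsELasso E x L' ∧ ((ω.trans L).trans ω.symm).Homotopic L' := by
  induction h with
  | @conj z α γ hγ =>
      refine ⟨((ω.trans α).trans γ).trans (ω.trans α).symm, .conj (ω.trans α) γ hγ, ?_⟩
      rw [homotopic_iff]
      simp [hom_trans, hom_symm]
  | @concat l₁ l₂ h₁ h₂ ih₁ ih₂ =>
      obtain ⟨L₁, hL₁, hh₁⟩ := ih₁
      obtain ⟨L₂, hL₂, hh₂⟩ := ih₂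
      refine ⟨L₁.trans L₂, .concat hL₁ hL₂, ?_⟩
      rw [homotopic_iff] at hh₁ hh₂ ⊢
      simp only [hom_trans, hom_symm] at hh₁ hh₂ ⊢
      rw [← hh₁, ← hh₂]
      simp

end LassoAux

/-- The lasso uniform structure makes `π₁(X,x₀)` a topological group: inversion is
continuous (if `α ∗ β⁻¹` is path-homotopic to an `E`-lasso then so is `α⁻¹ ∗ β`), and
multiplication is continuous (if `α ∗ β⁻¹` and `γ ∗ δ⁻¹` are each path-homotopic to
`E`-lassos then so is `(α ∗ γ) ∗ (β ∗ δ)⁻¹`). -/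
theorem stmt_15 {X : Type*} [UniformSpace X] (x₀ : X)
    (E : Set (X × X)) (hE : E ∈ 𝓤 X) :
    (∀ α β : Path x₀ x₀,
      (∃ L : Path x₀ x₀, IsELasso E x₀ L ∧ (α.trans β.symm).Homotopic L) →
      ∃ L : Path x₀ x₀, IsELasso E x₀ L ∧ (α.symm.trans β).Homotopic L) ∧
    (∀ α β γ δ : Path x₀ x₀,
      (∃ L : Path x₀ x₀, IsELasso E x₀ L ∧ (α.trans β.symm).Homotopic L) →
      (∃ L : Path x₀ x₀, IsELasso E x₀ L ∧ (γ.trans δ.symm).Homotopic L) →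
      ∃ L : Path x₀ x₀, IsELasso E x₀ L ∧
        ((α.trans γ).trans (β.trans δ).symm).Homotopic L) := by
  open LassoAux in
  constructor
  · rintro α β ⟨L, hL, hh⟩
    obtain ⟨L₂, hL₂, hh₂⟩ := LassoAux.lasso_symm hL
    obtain ⟨L₃, hL₃, hh₃⟩ := LassoAux.lasso_conj hL₂ α.symm
    refine ⟨L₃, hL₃, ?_⟩
    rw [LassoAux.homotopic_iff] at hh hh₂ hh₃ ⊢
    simp only [LassoAux.hom_trans, LassoAux.hom_symm] at hh hh₂ hh₃ ⊢
    rw [← hh₃, ← hh₂, ← hh]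
    simp
  · rintro α β γ δ ⟨L₁, hL₁, hh₁⟩ ⟨L₂, hL₂, hh₂⟩
    obtain ⟨L₃, hL₃, hh₃⟩ := LassoAux.lasso_conj hL₂ α
    refine ⟨L₃.trans L₁, .concat hL₃ hL₁, ?_⟩
    rw [LassoAux.homotopic_iff] at hh₁ hh₂ hh₃ ⊢
    simp only [LassoAux.hom_trans, LassoAux.hom_symm] at hh₁ hh₂ hh₃ ⊢
    rw [← hh₃, ← hh₁, ← hh₂]
    simp
end

section
/- If X is a path-connected, locally path-connected topological space that is semi-locally simply connected, then π₁(X,x₀) with the quotient of the compact-open topology on the loop space is discrete. -/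
open Set
open scoped unitInterval

open CategoryTheory

attribute [local instance] Path.Homotopic.setoid

namespace Stmt16

variable {X : Type*} [TopologicalSpace X]

/-- Straight-line homotopy between two reparametrizations of (the extension of) a path. -/
lemma homotopic_extend {x y u v : X} (α : Path x y)
    {f g : I → ℝ} (hfc : Continuous f) (hgc : Continuous g)
    (h0 : f 0 = g 0) (h1 : f 1 = g 1)
    (p q : Path u v) (hp : ∀ t, p t = α.extend (f t)) (hq : ∀ t, q t = α.extend (g t)) :
    p.Homotopic q := by
  refine ⟨⟨⟨⟨fun st => α.extend ((1 - (st.1 : ℝ)) * f st.2 + (st.1 : ℝ) * g st.2), ?_⟩,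
      ?_, ?_⟩, ?_⟩⟩
  · exact α.continuous_extend.comp (by fun_prop)
  · intro t; simp [hp t]
  · intro t; simp [hq t]
  · intro t s hs
    rcases hs with rfl | hs1
    · show α.extend ((1 - (t:ℝ)) * f 0 + (t:ℝ) * g 0) = p 0
      rw [hp 0, h0]
      exact congrArg α.extend (by ring)
    · rcases hs1 with rfl
      show α.extend ((1 - (t:ℝ)) * f 1 + (t:ℝ) * g 1) = p 1
      rw [hp 1, h1]
      exact congrArg α.extend (by ring)

/-- The affine subpath of a path, from parameter `a` to parameter `b`. -/
noncomputable def trunc {x y : X} (α : Path x y) (a b : ℝ) : Path (α.extend a) (α.extend b) where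
  toFun t := α.extend (a + t * (b - a))
  continuous_toFun := α.continuous_extend.comp (by fun_prop)
  source' := by simp
  target' := by simp

lemma trunc_apply {x y : X} (α : Path x y) (a b : ℝ) (t : I) :
    trunc α a b t = α.extend (a + t * (b - a)) := rfl

lemma trunc_self {x y : X} (α : Path x y) (a : ℝ) :
    trunc α a a = Path.refl (α.extend a) := by
  ext t
  simp [trunc_apply]

lemma trunc_range_subset {x y : X} (α : Path x y) {a b : ℝ} (hab : a ≤ b) {S : Set X}
    (h : ∀ u : ℝ, a ≤ u → u ≤ b → α.extend u ∈ S) : range (trunc α a b) ⊆ S := by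
  rintro _ ⟨t, rfl⟩
  have h1 : (t : ℝ) ∈ Icc (0:ℝ) 1 := t.2
  exact h _ (by nlinarith [h1.1, h1.2]) (by nlinarith [h1.1, h1.2])

lemma trunc_splits {x y : X} (α : Path x y) (a b c : ℝ) :
    (trunc α a c).Homotopic ((trunc α a b).trans (trunc α b c)) := by
  have hg : Continuous fun t : I =>
      if (t : ℝ) ≤ 1 / 2 then a + 2 * t * (b - a) else b + (2 * t - 1) * (c - b) := by
    apply Continuous.if_le (by fun_prop) (by fun_prop) (by fun_prop) continuous_const
    intro t ht
    rw [ht]; ring_nf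
  refine homotopic_extend α (f := fun t : I => a + t * (c - a))
    (g := fun t : I => if (t : ℝ) ≤ 1 / 2 then a + 2 * t * (b - a) else b + (2 * t - 1) * (c - b))
    (by fun_prop) hg (by norm_num) (by norm_num) _ _ (fun t => rfl) ?_
  intro t
  rw [Path.trans_apply]
  beta_reduce
  split_ifs with h
  · rw [trunc_apply]
  · rw [trunc_apply]

lemma trunc_zero_one {x y : X} (α : Path x y) :
    trunc α 0 1 = α.cast α.extend_zero α.extend_one := by
  ext t
  rw [trunc_apply]
  simp [Path.cast_coe, α.extend_extends' ⟨(t:ℝ), t.2⟩]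

lemma homotopic_of_cast_homotopic {x y x' y' : X} (hx : x' = x) (hy : y' = y)
    {p q : Path x y} (h : (p.cast hx hy).Homotopic (q.cast hx hy)) : p.Homotopic q := by
  subst hx; subst hy; exact h

/-- The homotopy class of a path, as a morphism in the fundamental groupoid. -/
noncomputable def hom {x y : X} (p : Path x y) :
    FundamentalGroupoid.mk x ⟶ FundamentalGroupoid.mk y := ⟦p⟧

lemma hom_comp {x y z : X} (p : Path x y) (q : Path y z) :
    hom (p.trans q) = hom p ≫ hom q := rfl

lemma hom_eq_of_homotopic {x y : X} {p q : Path x y} (h : p.Homotopic q) : hom p = hom q :=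
  Quotient.sound h

lemma homotopic_of_hom_eq {x y : X} {p q : Path x y} (h : hom p = hom q) : p.Homotopic q :=
  Quotient.exact h

lemma hom_refl (x : X) : hom (Path.refl x) = 𝟙 (FundamentalGroupoid.mk x) := rfl

lemma hom_symm_comp {x y : X} (p : Path x y) : hom p.symm ≫ hom p = 𝟙 _ :=
  Quotient.sound ⟨(Path.Homotopy.reflSymmTrans p).symm⟩

lemma hom_comp_symm {x y : X} (p : Path x y) : hom p ≫ hom p.symm = 𝟙 _ :=
  Quotient.sound ⟨(Path.Homotopy.reflTransSymm p).symm⟩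

lemma hom_symm_comp_assoc {x y : X} (p : Path x y) {c : FundamentalGroupoid X}
    (f : FundamentalGroupoid.mk y ⟶ c) : hom p.symm ≫ hom p ≫ f = f := by
  rw [← Category.assoc, hom_symm_comp, Category.id_comp]

lemma hom_comp_symm_assoc {x y : X} (p : Path x y) {c : FundamentalGroupoid X}
    (f : FundamentalGroupoid.mk x ⟶ c) : hom p ≫ hom p.symm ≫ f = f := by
  rw [← Category.assoc, hom_comp_symm, Category.id_comp]

lemma exists_good {X : Type*} [TopologicalSpace X] [LocallyPathConnectedSpace X]
    (hslsc : ∀ x : X, ∃ U ∈ nhds x, ∀ γ : Path x x, Set.range γ ⊆ U →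
      γ.Homotopic (Path.refl x)) (x : X) :
    ∃ V : Set X, IsOpen V ∧ x ∈ V ∧ IsPathConnected V ∧
      ∀ (y : X) (L : Path y y), range L ⊆ V → L.Homotopic (Path.refl y) := by
  obtain ⟨U, hU, hUloop⟩ := hslsc x
  have hxint : x ∈ interior U := mem_interior_iff_mem_nhds.mpr hU
  refine ⟨pathComponentIn (interior U) x, isOpen_interior.pathComponentIn x,
    mem_pathComponentIn_self hxint, isPathConnected_pathComponentIn hxint, ?_⟩
  intro y L hL
  have hy : y ∈ pathComponentIn (interior U) x := L.source ▸ hL (mem_range_self 0)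
  obtain ⟨c, hc⟩ : JoinedIn (interior U) x y := hy
  have hMrange : range (c.trans (L.trans c.symm)) ⊆ U := by
    rw [Path.trans_range, Path.trans_range, Path.symm_range]
    refine union_subset ?_ (union_subset ?_ ?_)
    · rintro _ ⟨t, rfl⟩; exact interior_subset (hc t)
    · exact (hL.trans pathComponentIn_subset).trans interior_subset
    · rintro _ ⟨t, rfl⟩; exact interior_subset (hc t)
  have h1 : hom c ≫ hom L ≫ hom c.symm = 𝟙 _ :=
    hom_eq_of_homotopic (hUloop _ hMrange)
  have e1 : hom L = hom c.symm ≫ (hom c ≫ hom L ≫ hom c.symm) ≫ hom c := by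
    simp only [Category.assoc]
    rw [hom_symm_comp_assoc c (f := hom L ≫ hom c.symm ≫ hom c)]
    rw [hom_symm_comp c, Category.comp_id]
  rw [h1, Category.id_comp, hom_symm_comp] at e1
  exact homotopic_of_hom_eq e1

theorem exists_open_nhd {X : Type*} [TopologicalSpace X] [LocallyPathConnectedSpace X]
    (V : X → Set X) (Vopen : ∀ x, IsOpen (V x)) (Vmem : ∀ x, x ∈ V x)
    (Vloop : ∀ x, ∀ (y : X) (L : Path y y), range L ⊆ V x → L.Homotopic (Path.refl y))
    (Vpc : ∀ x, IsPathConnected (V x))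
    (x₀ : X) (γ : Path x₀ x₀) :
    ∃ W : Set (Path x₀ x₀), IsOpen W ∧ γ ∈ W ∧ ∀ α ∈ W, α.Homotopic γ := by
  classical
  -- Lebesgue number for the cover of `I` by preimages of the good sets
  obtain ⟨δ, δpos, hδ⟩ := lebesgue_number_lemma_of_metric (s := (univ : Set I))
    (c := fun x : X => γ ⁻¹' (V x)) isCompact_univ
    (fun x => (Vopen x).preimage γ.continuous)
    (fun t _ => mem_iUnion.2 ⟨γ t, Vmem (γ t)⟩)
  obtain ⟨n, hn⟩ := exists_nat_one_div_lt δpos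
  set N : ℕ := n + 1 with hN
  have hNpos : (0:ℝ) < N := by positivity
  set pt : ℕ → ℝ := fun i => i / N with hpt
  have pt_mono : ∀ {i j : ℕ}, i ≤ j → pt i ≤ pt j := fun {i j} h =>
    (div_le_div_iff_of_pos_right hNpos).mpr (by exact_mod_cast h)
  have pt_nonneg : ∀ i, 0 ≤ pt i := fun i => by positivity
  have pt_le_one : ∀ {i}, i ≤ N → pt i ≤ 1 := by
    intro i h
    rw [hpt, div_le_one hNpos]
    exact_mod_cast h
  have pt_succ_sub : ∀ i, pt (i+1) - pt i = 1 / N := by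
    intro i
    rw [hpt]
    push_cast
    ring
  have hpt0 : pt 0 = 0 := by simp [hpt]
  have hptN : pt N = 1 := by
    rw [hpt]
    exact div_self hNpos.ne'
  set ti : ℕ → I := fun i => Set.projIcc 0 1 zero_le_one (pt i) with hti
  choose P hP using fun i : ℕ => hδ (ti i) (mem_univ _)
  set Vi : ℕ → Set X := fun i => V (P i) with hVi
  -- every point of `γ` on the `i`-th segment lies in `Vi i`
  have hseg : ∀ i, ∀ u : ℝ, pt i ≤ u → u ≤ pt (i+1) → u ≤ 1 → γ.extend u ∈ Vi i := by
    intro i u h1 h2 h3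
    have hu0 : (0:ℝ) ≤ u := (pt_nonneg i).trans h1
    have hpti : pt i ∈ Icc (0:ℝ) 1 := ⟨pt_nonneg i, h1.trans h3⟩
    rw [γ.extend_apply ⟨hu0, h3⟩]
    refine hP i ?_
    rw [Metric.mem_ball, Subtype.dist_eq]
    rw [hti]
    simp only []
    rw [Set.projIcc_of_mem zero_le_one hpti]
    show dist u (pt i) < δ
    rw [Real.dist_eq, abs_of_nonneg (sub_nonneg.2 h1)]
    calc u - pt i ≤ pt (i+1) - pt i := by linarith
    _ = 1 / N := pt_succ_sub i
    _ < δ := by rw [hN]; push_cast; exact hn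
  have hext : ∀ (β : Path x₀ x₀) i, β.extend (pt i) = β (ti i) := fun β i => rfl
  set K : ℕ → Set I := fun i => (fun t : I => (t:ℝ)) ⁻¹' Icc (pt i) (pt (i+1)) with hK
  set Ci : ℕ → Set X := fun i => pathComponentIn (Vi (i-1) ∩ Vi i) (γ (ti i)) with hCi
  have hCmem : ∀ i, 0 < i → i < N → γ (ti i) ∈ Vi (i-1) ∩ Vi i := by
    intro i h0 hiN
    have hile : i - 1 + 1 = i := by omega
    constructor
    · rw [← hext]
      refine hseg (i-1) (pt i) (pt_mono (by omega)) ?_ (pt_le_one hiN.le)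
      rw [hile]
    · rw [← hext]
      exact hseg i (pt i) le_rfl (pt_mono (by omega)) (pt_le_one hiN.le)
  set W : Set (Path x₀ x₀) :=
    {α | ∀ i < N, MapsTo α (K i) (Vi i)} ∩ {α | ∀ i, 0 < i → i < N → α (ti i) ∈ Ci i} with hW
  refine ⟨W, ?_, ?_, ?_⟩
  · -- `W` is open
    apply IsOpen.inter
    · have : {α : Path x₀ x₀ | ∀ i < N, MapsTo ⇑α (K i) (Vi i)}
          = ⋂ i ∈ Finset.range N, {α : Path x₀ x₀ | MapsTo ⇑α (K i) (Vi i)} := by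
        ext α
        simp only [mem_setOf_eq, mem_iInter, Finset.mem_range]
      rw [this]
      refine isOpen_biInter_finset fun i _ => ?_
      have hKc : IsCompact (K i) := (isClosed_Icc.preimage continuous_subtype_val).isCompact
      show IsOpen ((fun α : Path x₀ x₀ => (α : C(I, X))) ⁻¹'
        {f : C(I, X) | MapsTo ⇑f (K i) (Vi i)})
      exact (ContinuousMap.isOpen_setOf_mapsTo hKc (Vopen _)).preimage continuous_induced_dom
    · have : {α : Path x₀ x₀ | ∀ i, 0 < i → i < N → α (ti i) ∈ Ci i}
          = ⋂ i ∈ Finset.range N, {α : Path x₀ x₀ | 0 < i → α (ti i) ∈ Ci i} := by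
        ext α
        simp only [mem_setOf_eq, mem_iInter, Finset.mem_range]
        exact ⟨fun h i hiN h0 => h i h0 hiN, fun h i h0 hiN => h i hiN h0⟩
      rw [this]
      refine isOpen_biInter_finset fun i _ => ?_
      by_cases h0 : 0 < i
      · have : {α : Path x₀ x₀ | 0 < i → α (ti i) ∈ Ci i}
            = (fun α : Path x₀ x₀ => α (ti i)) ⁻¹' Ci i := by
          ext α; simp [h0]
        rw [this]
        refine IsOpen.preimage (continuous_eval_const (ti i)) ?_
        exact ((Vopen _).inter (Vopen _)).pathComponentIn _
      · have : {α : Path x₀ x₀ | 0 < i → α (ti i) ∈ Ci i} = univ := by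
          ext α; simp [h0]
        rw [this]
        exact isOpen_univ
  · -- `γ ∈ W`
    constructor
    · intro i hiN t ht
      rw [← γ.extend_extends' t]
      exact hseg i t ht.1 ht.2 t.2.2
    · intro i h0 hiN
      exact mem_pathComponentIn_self (hCmem i h0 hiN)
  · -- every element of `W` is homotopic to `γ`
    rintro α ⟨hα1, hα2⟩
    have hsegα : ∀ i, i < N → ∀ u : ℝ, pt i ≤ u → u ≤ pt (i+1) → α.extend u ∈ Vi i := by
      intro i hiN u h1 h2
      have hu0 : (0:ℝ) ≤ u := (pt_nonneg i).trans h1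
      have hu1 : u ≤ 1 := h2.trans (pt_le_one hiN)
      rw [α.extend_apply ⟨hu0, hu1⟩]
      exact hα1 i hiN ⟨h1, h2⟩
    -- choose the connecting paths
    have hcex : ∀ i, i ≤ N → ∃ ci : Path (γ.extend (pt i)) (α.extend (pt i)),
        (∀ j, (j + 1 = i ∨ j = i) → j < N → range ci ⊆ Vi j) ∧
        ((i = 0 ∨ i = N) → ∀ t, ci t = x₀) := by
      intro i hiN
      rcases eq_or_ne i 0 with rfl | hi0
      · have h1 : γ.extend (pt 0) = x₀ := by rw [hpt0]; exact γ.extend_zero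
        have h2 : α.extend (pt 0) = x₀ := by rw [hpt0]; exact α.extend_zero
        refine ⟨(Path.refl x₀).cast h1 h2, ?_, fun _ t => ?_⟩
        · rintro j (hj | rfl) hjN
          · omega
          · rintro _ ⟨t, rfl⟩
            have hval : ((Path.refl x₀).cast h1 h2) t = x₀ := by
              rw [Path.cast_coe]; rfl
            rw [hval, ← h1]
            exact hseg 0 (pt 0) le_rfl (pt_mono (by omega)) (pt_le_one (by omega))
        · rw [Path.cast_coe]; rfl
      rcases eq_or_ne i N with rfl | hiN'
      · have h1 : γ.extend (pt N) = x₀ := by rw [hptN]; exact γ.extend_one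
        have h2 : α.extend (pt N) = x₀ := by rw [hptN]; exact α.extend_one
        refine ⟨(Path.refl x₀).cast h1 h2, ?_, fun _ t => ?_⟩
        · rintro j (hj | rfl) hjN
          · rintro _ ⟨t, rfl⟩
            have hval : ((Path.refl x₀).cast h1 h2) t = x₀ := by
              rw [Path.cast_coe]; rfl
            rw [hval, ← h1]
            refine hseg j (pt N) (pt_mono (by omega)) ?_ (pt_le_one le_rfl)
            rw [hj]
          · omega
        · rw [Path.cast_coe]; rfl
      · have h0i : 0 < i := Nat.pos_of_ne_zero hi0
        have hiN2 : i < N := lt_of_le_of_ne hiN hiN'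
        have hmem := hCmem i h0i hiN2
        have hpc := isPathConnected_pathComponentIn hmem
        obtain ⟨p, hp⟩ : JoinedIn (Ci i) (γ (ti i)) (α (ti i)) :=
          hpc.joinedIn _ (mem_pathComponentIn_self hmem) _ (hα2 i h0i hiN2)
        refine ⟨p, ?_, ?_⟩
        · rintro j hj hjN _ ⟨t, rfl⟩
          have hmem2 : p t ∈ Vi (i-1) ∩ Vi i := pathComponentIn_subset (hp t)
          rcases hj with hj | rfl
          · have : j = i - 1 := by omega
            rw [this]
            exact hmem2.1
          · exact hmem2.2
        · rintro (rfl | rfl) t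
          · omega
          · omega
    choose c hcr hc0 using hcex
    -- the inductive claim
    have main : ∀ k, ∀ hk : k ≤ N,
        hom (c 0 (Nat.zero_le N)) ≫ hom (trunc α (pt 0) (pt k))
          = hom (trunc γ (pt 0) (pt k)) ≫ hom (c k hk) := by
      intro k
      induction k with
      | zero =>
        intro hk
        rw [trunc_self, trunc_self]
        calc hom (c 0 (Nat.zero_le N)) ≫ hom (Path.refl (α.extend (pt 0)))
            = hom ((c 0 (Nat.zero_le N)).trans (Path.refl (α.extend (pt 0)))) := rfl
          _ = hom (c 0 (Nat.zero_le N)) := hom_eq_of_homotopic ⟨Path.Homotopy.transRefl _⟩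
          _ = hom ((Path.refl (γ.extend (pt 0))).trans (c 0 hk)) :=
              (hom_eq_of_homotopic ⟨Path.Homotopy.reflTrans _⟩).symm
          _ = hom (Path.refl (γ.extend (pt 0))) ≫ hom (c 0 hk) := rfl
      | succ k IH =>
        intro hk
        have hk' : k ≤ N := by omega
        have hkN : k < N := by omega
        have hsplitα : hom (trunc α (pt 0) (pt (k+1)))
            = hom (trunc α (pt 0) (pt k)) ≫ hom (trunc α (pt k) (pt (k+1))) :=
          hom_eq_of_homotopic (trunc_splits α (pt 0) (pt k) (pt (k+1)))
        have hsplitγ : hom (trunc γ (pt 0) (pt (k+1)))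
            = hom (trunc γ (pt 0) (pt k)) ≫ hom (trunc γ (pt k) (pt (k+1))) :=
          hom_eq_of_homotopic (trunc_splits γ (pt 0) (pt k) (pt (k+1)))
        have hGr : range (trunc γ (pt k) (pt (k+1))) ⊆ Vi k :=
          trunc_range_subset γ (pt_mono (by omega))
            (fun u h1 h2 => hseg k u h1 h2 (h2.trans (pt_le_one hk)))
        have hAr : range (trunc α (pt k) (pt (k+1))) ⊆ Vi k :=
          trunc_range_subset α (pt_mono (by omega)) (fun u h1 h2 => hsegα k hkN u h1 h2)
        have hckr : range (c k hk') ⊆ Vi k := hcr k hk' k (Or.inr rfl) hkN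
        have hck1r : range (c (k+1) hk) ⊆ Vi k := hcr (k+1) hk k (Or.inl rfl) hkN
        have hLr : range ((trunc γ (pt k) (pt (k+1))).trans ((c (k+1) hk).trans
            ((trunc α (pt k) (pt (k+1))).symm.trans (c k hk').symm))) ⊆ Vi k := by
          rw [Path.trans_range, Path.trans_range, Path.trans_range, Path.symm_range,
            Path.symm_range]
          exact union_subset hGr (union_subset hck1r (union_subset hAr hckr))
        have h1 : hom (trunc γ (pt k) (pt (k+1))) ≫ hom (c (k+1) hk) ≫
            hom (trunc α (pt k) (pt (k+1))).symm ≫ hom (c k hk').symm = 𝟙 _ :=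
          hom_eq_of_homotopic (Vloop (P k) _ _ hLr)
        have key : hom (c k hk') ≫ hom (trunc α (pt k) (pt (k+1)))
            = hom (trunc γ (pt k) (pt (k+1))) ≫ hom (c (k+1) hk) := by
          calc hom (c k hk') ≫ hom (trunc α (pt k) (pt (k+1)))
              = (hom (trunc γ (pt k) (pt (k+1))) ≫ hom (c (k+1) hk) ≫
                  hom (trunc α (pt k) (pt (k+1))).symm ≫ hom (c k hk').symm) ≫
                  hom (c k hk') ≫ hom (trunc α (pt k) (pt (k+1))) := by
                rw [h1, Category.id_comp]
            _ = hom (trunc γ (pt k) (pt (k+1))) ≫ hom (c (k+1) hk) := by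
                simp only [Category.assoc]
                rw [hom_symm_comp_assoc (c k hk') (f := hom (trunc α (pt k) (pt (k+1))))]
                rw [hom_symm_comp (trunc α (pt k) (pt (k+1))), Category.comp_id]
        calc hom (c 0 (Nat.zero_le N)) ≫ hom (trunc α (pt 0) (pt (k+1)))
            = hom (c 0 (Nat.zero_le N)) ≫ hom (trunc α (pt 0) (pt k)) ≫
                hom (trunc α (pt k) (pt (k+1))) := by rw [hsplitα]
          _ = (hom (c 0 (Nat.zero_le N)) ≫ hom (trunc α (pt 0) (pt k))) ≫
                hom (trunc α (pt k) (pt (k+1))) := by rw [Category.assoc]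
          _ = (hom (trunc γ (pt 0) (pt k)) ≫ hom (c k hk')) ≫
                hom (trunc α (pt k) (pt (k+1))) := by rw [IH hk']
          _ = hom (trunc γ (pt 0) (pt k)) ≫ hom (c k hk') ≫
                hom (trunc α (pt k) (pt (k+1))) := by rw [Category.assoc]
          _ = hom (trunc γ (pt 0) (pt k)) ≫ hom (trunc γ (pt k) (pt (k+1))) ≫
                hom (c (k+1) hk) := by rw [key]
          _ = hom (trunc γ (pt 0) (pt (k+1))) ≫ hom (c (k+1) hk) := by
                rw [hsplitγ, Category.assoc]
    -- conclude
    have fin := main N le_rfl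
    have hx : γ.extend (pt 0) = x₀ := by rw [hpt0]; exact γ.extend_zero
    have hy : α.extend (pt N) = x₀ := by rw [hptN]; exact α.extend_one
    have e1 : (c 0 (Nat.zero_le N)).trans (trunc α (pt 0) (pt N))
        = ((Path.refl x₀).trans α).cast hx hy := by
      ext t
      show ((c 0 (Nat.zero_le N)).trans (trunc α (pt 0) (pt N))) t
        = (((Path.refl x₀).trans α).cast hx hy) t
      rw [show ((((Path.refl x₀).trans α).cast hx hy) t) = ((Path.refl x₀).trans α) t from
        congrFun (Path.cast_coe _ hx hy) t]
      rw [Path.trans_apply, Path.trans_apply]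
      split_ifs with h
      · rw [hc0 0 (Nat.zero_le N) (Or.inl rfl)]
        rfl
      · rw [trunc_apply, hpt0, hptN]
        simp only [zero_add, sub_zero, mul_one]
        exact α.extend_apply _
    have e2 : (trunc γ (pt 0) (pt N)).trans (c N le_rfl)
        = (γ.trans (Path.refl x₀)).cast hx hy := by
      ext t
      show ((trunc γ (pt 0) (pt N)).trans (c N le_rfl)) t
        = ((γ.trans (Path.refl x₀)).cast hx hy) t
      rw [show (((γ.trans (Path.refl x₀)).cast hx hy) t) = (γ.trans (Path.refl x₀)) t from
        congrFun (Path.cast_coe _ hx hy) t]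
      rw [Path.trans_apply, Path.trans_apply]
      split_ifs with h
      · rw [trunc_apply, hpt0, hptN]
        simp only [zero_add, sub_zero, mul_one]
        exact γ.extend_apply _
      · rw [hc0 N le_rfl (Or.inr rfl)]
        rfl
    have fin2 : (((Path.refl x₀).trans α).cast hx hy).Homotopic
        ((γ.trans (Path.refl x₀)).cast hx hy) := by
      rw [← e1, ← e2]
      exact homotopic_of_hom_eq fin
    have fin3 : ((Path.refl x₀).trans α).Homotopic (γ.trans (Path.refl x₀)) :=
      homotopic_of_cast_homotopic hx hy fin2
    have h4 : α.Homotopic ((Path.refl x₀).trans α) :=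
      Path.Homotopic.symm ⟨Path.Homotopy.reflTrans α⟩
    have h5 : (γ.trans (Path.refl x₀)).Homotopic γ := ⟨Path.Homotopy.transRefl γ⟩
    exact (h4.trans fin3).trans h5

end Stmt16

/-- If `X` is a path-connected, locally path-connected space that is semi-locally simply
connected, then `π₁(X,x₀)` with the quotient of the compact-open topology on the loop
space is discrete. -/
theorem stmt_16 {X : Type*} [TopologicalSpace X] [PathConnectedSpace X]
    [LocallyPathConnectedSpace X]
    (hslsc : ∀ x : X, ∃ U ∈ nhds x, ∀ γ : Path x x, Set.range γ ⊆ U →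
      γ.Homotopic (Path.refl x))
    (x₀ : X) :
    DiscreteTopology (Quotient (Path.Homotopic.setoid x₀ x₀)) := by
  choose V Vopen Vmem Vpc Vloop using Stmt16.exists_good hslsc
  rw [discreteTopology_iff_isOpen_singleton]
  intro q
  obtain ⟨γ, rfl⟩ := Quotient.exists_rep q
  rw [← (isQuotientMap_quotient_mk').isOpen_preimage]
  have hpre : (Quotient.mk' ⁻¹' {Quotient.mk (Path.Homotopic.setoid x₀ x₀) γ} : Set (Path x₀ x₀))
      = {α : Path x₀ x₀ | α.Homotopic γ} := by
    ext α
    simp only [mem_preimage, mem_singleton_iff, mem_setOf_eq]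
    exact ⟨fun h => Quotient.exact h, fun h => Quotient.sound h⟩
  rw [hpre]
  rw [isOpen_iff_forall_mem_open]
  intro α hα
  obtain ⟨W, Wopen, WmemA, hW⟩ := Stmt16.exists_open_nhd V Vopen Vmem Vloop Vpc x₀ α
  exact ⟨W, fun β hβ => (hW β hβ).trans hα, Wopen, WmemA⟩
end

section
/- If X̃ with the quotient of the compact-open topology (on the space of paths starting at x₀) contains an isolated point of π₁(X,x₀), and X is path-connected, then X is semi-locally simply connected. -/
open Set
open scoped unitInterval

attribute [local instance] Path.Homotopic.setoid

open CategoryTheory in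
/-- Cancellation in the fundamental groupoid: if `a ⬝ (b ⬝ (g ⬝ b⁻¹))` is homotopic to `a`,
then `g` is null-homotopic. -/
lemma cancel_aux {X : Type*} [TopologicalSpace X] {x₀ x₁ : X} (a : Path x₀ x₀)
    (b : Path x₀ x₁) (g : Path x₁ x₁)
    (h : (a.trans (b.trans (g.trans b.symm))).Homotopic a) :
    g.Homotopic (Path.refl x₁) := by
  let A : FundamentalGroupoid X := ⟨x₀⟩
  let B : FundamentalGroupoid X := ⟨x₁⟩
  let pa : A ⟶ A := ⟦a⟧
  let pb : A ⟶ B := ⟦b⟧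
  let pb' : B ⟶ A := ⟦b.symm⟧
  let pg : B ⟶ B := ⟦g⟧
  have hb : pb ≫ pb' = 𝟙 A := by
    show Path.Homotopic.Quotient.trans ⟦b⟧ ⟦b.symm⟧ = (⟦Path.refl x₀⟧ : Path.Homotopic.Quotient x₀ x₀)
    show (⟦b.trans b.symm⟧ : Path.Homotopic.Quotient x₀ x₀) = ⟦Path.refl x₀⟧
    exact Quotient.sound ⟨(Path.Homotopy.reflTransSymm b).symm⟩
  have key : pa ≫ (pb ≫ (pg ≫ pb')) = pa := by
    show Path.Homotopic.Quotient.trans ⟦a⟧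
        (Path.Homotopic.Quotient.trans ⟦b⟧ (Path.Homotopic.Quotient.trans ⟦g⟧ ⟦b.symm⟧)) = ⟦a⟧
    show (⟦a.trans (b.trans (g.trans b.symm))⟧ : Path.Homotopic.Quotient x₀ x₀) = ⟦a⟧
    exact Quotient.sound h
  have k2 : pb ≫ (pg ≫ pb') = 𝟙 A :=
    (cancel_epi pa).mp (by rw [Category.comp_id]; exact key)
  have k3 : pg ≫ pb' = pb' := (cancel_epi pb).mp (by rw [k2, hb])
  have k4 : pg = 𝟙 B := (cancel_mono pb').mp (by rw [k3, Category.id_comp])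
  exact Quotient.exact k4

/-- If `X̃` with the quotient of the compact-open topology on the space of paths starting
at `x₀` contains an isolated point of `π₁(X,x₀)` (there is a saturated open set `V` of
the path space meeting the loops exactly in the class of one loop `α`), and `X` is
path-connected, then `X` is semi-locally simply connected. -/
theorem stmt_17 {X : Type*} [TopologicalSpace X] [PathConnectedSpace X] (x₀ : X)
    (α : C(I, X)) (hα0 : α 0 = x₀) (hα1 : α 1 = x₀)
    (V : Set {γ : C(I, X) // γ 0 = x₀}) (hV : IsOpen V)
    (hsat : ∀ γ γ' : {γ : C(I, X) // γ 0 = x₀},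
      γ.1.HomotopicRel γ'.1 {0, 1} → (γ ∈ V ↔ γ' ∈ V))
    (hαV : (⟨α, hα0⟩ : {γ : C(I, X) // γ 0 = x₀}) ∈ V)
    (honly : ∀ γ : {γ : C(I, X) // γ 0 = x₀}, γ ∈ V → γ.1 1 = x₀ →
      γ.1.HomotopicRel α {0, 1}) :
    ∀ x₁ : X, ∃ U ∈ nhds x₁, ∀ γ : Path x₁ x₁, Set.range γ ⊆ U →
      γ.Homotopic (Path.refl x₁) := by
  intro x₁
  obtain ⟨β⟩ : Nonempty (Path x₀ x₁) := ⟨PathConnectedSpace.somePath x₀ x₁⟩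
  let αp : Path x₀ x₀ := { toContinuousMap := α, source' := hα0, target' := hα1 }
  -- the space of loops at `x₁` (as raw continuous maps)
  let S := {γ : C(I, X) // γ 0 = x₁ ∧ γ 1 = x₁}
  let pathOf : S → Path x₁ x₁ := fun s =>
    { toContinuousMap := s.1, source' := s.2.1, target' := s.2.2 }
  have hpathOf : Continuous pathOf := continuous_induced_rng.mpr continuous_subtype_val
  -- conjugation map into the space of paths at `x₀`
  let Φ : S → Path x₀ x₀ := fun s => αp.trans (β.trans ((pathOf s).trans β.symm))
  have hΦ : Continuous Φ :=
    Continuous.path_trans continuous_const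
      (Continuous.path_trans continuous_const
        (Continuous.path_trans hpathOf continuous_const))
  let F : S → {γ : C(I, X) // γ 0 = x₀} := fun s => ⟨(Φ s).toContinuousMap, (Φ s).source'⟩
  have hF : Continuous F :=
    Continuous.subtype_mk (continuous_induced_dom.comp hΦ) _
  -- the constant loop lands in `V`
  let c₁ : S := ⟨ContinuousMap.const I x₁, rfl, rfl⟩
  have hpc₁ : pathOf c₁ = Path.refl x₁ := rfl
  have h1 : (Φ c₁).Homotopic αp := by
    have e1 : ((Path.refl x₁).trans β.symm).Homotopic β.symm := ⟨Path.Homotopy.reflTrans β.symm⟩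
    have e2 : (β.trans β.symm).Homotopic (Path.refl x₀) := ⟨(Path.Homotopy.reflTransSymm β).symm⟩
    have e3 : (β.trans ((Path.refl x₁).trans β.symm)).Homotopic (Path.refl x₀) :=
      ((Path.Homotopic.refl β).hcomp e1).trans e2
    have e4 : (αp.trans (β.trans ((Path.refl x₁).trans β.symm))).Homotopic
        (αp.trans (Path.refl x₀)) := (Path.Homotopic.refl αp).hcomp e3
    have e5 : (αp.trans (Path.refl x₀)).Homotopic αp := ⟨Path.Homotopy.transRefl αp⟩
    show (αp.trans (β.trans ((pathOf c₁).trans β.symm))).Homotopic αp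
    rw [hpc₁]
    exact e4.trans e5
  have hc₁V : F c₁ ∈ V := by
    refine (hsat (F c₁) ⟨α, hα0⟩ ?_).mpr hαV
    exact h1
  -- extract a basic compact-open neighborhood of the constant loop
  have hW : IsOpen (F ⁻¹' V) := hV.preimage hF
  obtain ⟨O, hO, hWO⟩ := isOpen_induced_iff.mp hW
  have hbasis := TopologicalSpace.isTopologicalBasis_of_subbasis
    (ContinuousMap.compactOpen_eq (X := I) (Y := X))
  have hc₁O : (ContinuousMap.const I x₁ : C(I, X)) ∈ O := by
    have : c₁ ∈ F ⁻¹' V := hc₁V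
    rw [← hWO] at this
    exact this
  obtain ⟨v, hvb, hcv, hvO⟩ := hbasis.exists_subset_of_mem_open hc₁O hO
  have hvopen : IsOpen v := hbasis.isOpen hvb
  -- the neighborhood of `x₁`
  refine ⟨(fun x => (ContinuousMap.const I x : C(I, X))) ⁻¹' v, ?_, ?_⟩
  · exact (hvopen.preimage ContinuousMap.continuous_const').mem_nhds hcv
  · intro γ hγ
    -- γ (as a continuous map) lies in the basic open set v
    have hγv : (γ : C(I, X)) ∈ v := by
      obtain ⟨Fam, ⟨hFamfin, hFamsub⟩, rfl⟩ := hvb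
      intro s hs
      obtain ⟨K, hK, Uo, hUo, rfl⟩ := hFamsub hs
      intro k hk
      have hx : γ k ∈ (fun x => (ContinuousMap.const I x : C(I, X))) ⁻¹' ⋂₀ Fam :=
        hγ ⟨k, rfl⟩
      exact hx _ hs hk
    let sγ : S := ⟨(γ : C(I, X)), γ.source', γ.target'⟩
    have hsγV : F sγ ∈ V := by
      have : sγ ∈ F ⁻¹' V := by rw [← hWO]; exact hvO hγv
      exact this
    have hend : (F sγ).1 1 = x₀ := (Φ sγ).target'
    have hrel := honly (F sγ) hsγV hend
    have hpγ : pathOf sγ = γ := by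
      cases γ
      rfl
    have hhom : (αp.trans (β.trans (γ.trans β.symm))).Homotopic αp := by
      rw [← hpγ]
      exact hrel
    exact cancel_aux αp β γ hhom
end
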